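/- Let k, t be positive integers with t ≤ k, and let p_1^{n_1}···p_m^{n_m} be the prime factorization of gcd(k, t) with M = {1,...,m}. Then the number of t-element subsets A of ZMod k containing 0 whose least period under the shift map equals k is ∑_{S ⊆ M} (−1)^{|S|} C(k/∏_{i∈S} p_i − 1, t/∏_{i∈S} p_i − 1). -/

import Mathlib

/-- The shift map on finsets of `ZMod m`. -/
def sh (m : ℕ) (A : Finset (ZMod m)) : Finset (ZMod m) := A.image (· + 1)

/-!
The shift acts on subsets as translation, so `A` is fixed by its `n`-th iterate exactly when
`A + n = A`. For `n ∣ k` these sets are the preimages of subsets of `ZMod n`, so the `t`-sets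
containing `0` that are fixed by translation by `n` are counted by `C(n - 1, t / (k / n) - 1)`, and
there are none unless `k / n ∣ t`. Every minimal period divides `k`, and Möbius inversion over
the divisors of `k` isolates the sets of minimal period `k`; only the squarefree divisors of
`gcd(k, t)` contribute, and these are the products of sets of its prime factors.
-/

open Finset Function ArithmeticFunction
open scoped ArithmeticFunction.Moebius

namespace Function

variable {α : Type*} [DecidableEq α] (f : α → α) (s : Finset α)

theorem card_isPeriodicPt_eq_sum_card_minimalPeriod_eq {n : ℕ} (hn : 0 < n) :
    #{x ∈ s | IsPeriodicPt f n x} = ∑ i ∈ n.divisors, #{x ∈ s | minimalPeriod f x = i} := by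
  rw [card_eq_sum_card_fiberwise (f := minimalPeriod f) (t := n.divisors)]
  · refine sum_congr rfl fun i hi => ?_
    rw [filter_filter]
    refine congrArg card (filter_congr fun x _ => and_iff_right_of_imp fun hx => ?_)
    exact isPeriodicPt_iff_minimalPeriod_dvd.mpr (hx ▸ Nat.dvd_of_mem_divisors hi)
  · intro x hx
    exact Nat.mem_divisors.mpr ⟨(mem_filter.mp hx).2.minimalPeriod_dvd, hn.ne'⟩

theorem card_minimalPeriod_eq_eq_sum_moebius {n : ℕ} (hn : 0 < n) :
    (#{x ∈ s | minimalPeriod f x = n} : ℤ)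
      = ∑ d ∈ n.divisors, μ d * #{x ∈ s | IsPeriodicPt f (n / d) x} := by
  have hsum (m : ℕ) (hm : 0 < m) :
      ∑ i ∈ m.divisors, (#{x ∈ s | minimalPeriod f x = i} : ℤ)
        = #{x ∈ s | IsPeriodicPt f m x} := by
    exact_mod_cast (card_isPeriodicPt_eq_sum_card_minimalPeriod_eq f s hm).symm
  rw [← sum_eq_iff_sum_smul_moebius_eq.mp hsum n hn,
    Nat.sum_divisorsAntidiagonal fun d m => μ d • (#{x ∈ s | IsPeriodicPt f m x} : ℤ)]
  simp only [smul_eq_mul]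

end Function

theorem Nat.sum_powerset_primeFactors_eq_sum_moebius {R : Type*} [AddCommGroup R] {n : ℕ}
    (hn : n ≠ 0) (f : ℕ → R) :
    ∑ S ∈ n.primeFactors.powerset, (-1) ^ #S • f (S.prod id)
      = ∑ d ∈ n.divisors, μ d • f d := by
  have hsupport : ∀ d ∈ n.divisors, μ d • f d ≠ 0 → Squarefree d := fun d _ hd =>
    not_not.mp fun hsq => hd (by rw [moebius_eq_zero_of_not_squarefree hsq, zero_smul])
  rw [← sum_filter_of_ne hsupport, Nat.sum_divisors_filter_squarefree hn, Nat.factors_eq,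
    List.toFinset_coe, Nat.toFinset_factors]
  refine sum_congr rfl fun S hS => ?_
  have hprime : ∀ p ∈ S, p.Prime := fun p hp =>
    Nat.prime_of_mem_primeFactors (mem_powerset.mp hS hp)
  have hμ : μ (∏ p ∈ S, p) = (-1) ^ #S := by
    rw [isMultiplicative_moebius.map_prod_of_prime S hprime,
      prod_congr rfl fun p hp => moebius_apply_prime (hprime p hp), prod_const]
  rw [prod_val, ← hμ]
  rfl

theorem Finset.add_nsmul_mem_of_add_mem {M : Type*} [AddMonoid M] {A : Finset M} {a : M}
    (hA : ∀ x ∈ A, x + a ∈ A) (c : ℕ) : ∀ x ∈ A, x + c • a ∈ A := by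
  induction c with
  | zero => simp
  | succ c ih => exact fun x hx => by simpa [succ_nsmul, add_assoc] using hA _ (ih x hx)

theorem Finset.card_filter_card_eq_succ_and_mem {α : Type*} [Fintype α] [DecidableEq α]
    (a : α) (s : ℕ) :
    #{B : Finset α | #B = s + 1 ∧ a ∈ B} = (Fintype.card α - 1).choose s := by
  rw [← card_univ, ← card_erase_of_mem (mem_univ a), ← card_powersetCard]
  refine card_nbij' (erase · a) (insert a) (fun B hB => ?_) (fun C hC => ?_)
    (fun B hB => insert_erase (mem_filter.mp hB).2.2)
    (fun C hC => erase_insert fun ha => ?_)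
  · obtain ⟨hcard, ha⟩ := (mem_filter.mp hB).2
    exact mem_powersetCard.mpr ⟨erase_subset_erase _ (subset_univ B), by simp [hcard, ha]⟩
  · obtain ⟨hsub, hcard⟩ := mem_powersetCard.mp hC
    have ha : a ∉ C := fun ha => by simpa using hsub ha
    simp [card_insert_of_notMem ha, hcard]
  · simpa using (mem_powersetCard.mp hC).1 ha

section FiberCount

variable {G H F : Type*} [AddGroup G] [Fintype G] [AddGroup H] [Fintype H] [DecidableEq H]
  [FunLike F G H] [AddMonoidHomClass F G H] {φ : F}

theorem card_fiber_mul_card_eq_of_surjective (hφ : Surjective φ) (y : H) :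
    #{x | φ x = y} * Fintype.card H = Fintype.card G := calc
  #{x | φ x = y} * Fintype.card H = ∑ z, #{x | φ x = z} := by
    rw [sum_congr rfl fun z _ => AddMonoidHom.card_fiber_eq_of_mem_range φ (hφ z) (hφ y),
      sum_const, card_univ, smul_eq_mul, mul_comm]
  _ = Fintype.card G := (card_eq_sum_card_fiberwise fun _ _ => mem_univ _).symm

theorem card_filter_mem_mul_card_eq_of_surjective (hφ : Surjective φ) (B : Finset H) :
    #{x | φ x ∈ B} * Fintype.card H = #B * Fintype.card G := calc
  #{x | φ x ∈ B} * Fintype.card H = ∑ b ∈ B, #{x | φ x = b} * Fintype.card H := by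
    rw [card_eq_sum_card_fiberwise (s := {x | φ x ∈ B}) fun x hx => (mem_filter.mp hx).2,
      sum_mul]
    refine sum_congr rfl fun b hb => ?_
    rw [filter_filter]
    exact congrArg (#· * _) (filter_congr fun x _ => ⟨And.right, fun h => ⟨h ▸ hb, h⟩⟩)
  _ = #B * Fintype.card G := by
    rw [sum_congr rfl fun b _ => card_fiber_mul_card_eq_of_surjective hφ b, sum_const, smul_eq_mul]

end FiberCount

namespace ZMod

variable {k n : ℕ} [NeZero k] (φ : ZMod k →+* ZMod n)

theorem exists_eq_add_nsmul_of_map_eq {x y : ZMod k} (h : φ x = φ y) :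
    ∃ c : ℕ, x = y + c • (n : ZMod k) := by
  have hdvd : n ∣ (x - y).val := by
    rw [← natCast_eq_zero_iff, ← map_natCast φ, natCast_zmod_val, map_sub, h, sub_self]
  obtain ⟨c, hc⟩ := hdvd
  refine ⟨c, ?_⟩
  rw [nsmul_eq_mul, ← Nat.cast_mul, mul_comm, ← hc, natCast_zmod_val]
  ring

theorem filter_map_mem_image_eq {A : Finset (ZMod k)} (hA : ∀ x ∈ A, x + n ∈ A) :
    ({x | φ x ∈ A.image φ} : Finset (ZMod k)) = A := by
  ext x
  simp only [mem_filter_univ, mem_image]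
  refine ⟨fun ⟨a, ha, hax⟩ => ?_, fun hx => ⟨x, hx, rfl⟩⟩
  obtain ⟨c, rfl⟩ := exists_eq_add_nsmul_of_map_eq φ hax.symm
  exact add_nsmul_mem_of_add_mem hA c a ha

end ZMod

theorem sh_iterate (k n : ℕ) (A : Finset (ZMod k)) :
    (sh k)^[n] A = A.image (· + (n : ZMod k)) := by
  induction n with
  | zero => simp
  | succ n ih =>
    rw [iterate_succ_apply', ih, sh, image_image]
    congr 1
    funext x
    simp only [comp_apply]
    push_cast
    ring

theorem isPeriodicPt_sh_iff {k n : ℕ} {A : Finset (ZMod k)} :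
    IsPeriodicPt (sh k) n A ↔ ∀ x ∈ A, x + n ∈ A := by
  rw [IsPeriodicPt, IsFixedPt, sh_iterate, ← image_subset_iff]
  refine ⟨fun h => h.le, fun h => eq_of_subset_of_card_le h ?_⟩
  rw [card_image_of_injective _ (add_left_injective _)]

theorem card_isPeriodicPt_sh_eq {k n : ℕ} [NeZero k] [NeZero n] (hn : n ∣ k) (t : ℕ) :
    #{A : Finset (ZMod k) | (#A = t ∧ 0 ∈ A) ∧ IsPeriodicPt (sh k) n A}
      = #{B : Finset (ZMod n) | #B * (k / n) = t ∧ 0 ∈ B} := by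
  have φ : ZMod k →+* ZMod n := ZMod.castHom hn _
  have hcard (B : Finset (ZMod n)) : #{x | φ x ∈ B} = #B * (k / n) := by
    have h := card_filter_mem_mul_card_eq_of_surjective (ZMod.ringHom_surjective φ) B
    rw [ZMod.card, ZMod.card] at h
    rw [← Nat.mul_div_assoc _ hn, ← h, Nat.mul_div_cancel _ (Nat.pos_of_ne_zero (NeZero.ne n))]
  refine card_nbij' (image φ) (fun B => ({x | φ x ∈ B} : Finset (ZMod k))) (fun A hA => ?_)
    (fun B hB => ?_) (fun A hA => ?_) (fun B _ => ?_)
  all_goals simp only [coe_filter, Set.mem_ofPred_eq, mem_univ, true_and] at *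
  · obtain ⟨⟨rfl, h0⟩, hper⟩ := hA
    refine ⟨?_, mem_image.mpr ⟨0, h0, map_zero φ⟩⟩
    rw [← hcard, ZMod.filter_map_mem_image_eq φ (isPeriodicPt_sh_iff.mp hper)]
  · obtain ⟨rfl, h0⟩ := hB
    refine ⟨⟨hcard B, by simpa using h0⟩, isPeriodicPt_sh_iff.mpr fun x hx => ?_⟩
    simpa using hx
  · exact ZMod.filter_map_mem_image_eq φ (isPeriodicPt_sh_iff.mp hA.2)
  · ext b
    obtain ⟨x, rfl⟩ := ZMod.ringHom_surjective φ b
    simpa using ⟨fun ⟨a, ha, hax⟩ => hax ▸ ha, fun hx => ⟨x, hx, rfl⟩⟩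

theorem card_isPeriodicPt_sh_div_eq {k d t : ℕ} [NeZero k] (hd : d ∣ k) (ht : 0 < t) :
    #{A : Finset (ZMod k) | (#A = t ∧ 0 ∈ A) ∧ IsPeriodicPt (sh k) (k / d) A}
      = if d ∣ t then (k / d - 1).choose (t / d - 1) else 0 := by
  have hd0 : 0 < d := Nat.pos_of_dvd_of_pos hd (NeZero.pos k)
  have : NeZero (k / d) := ⟨(Nat.div_pos (Nat.le_of_dvd (NeZero.pos k) hd) hd0).ne'⟩
  rw [card_isPeriodicPt_sh_eq (Nat.div_dvd_of_dvd hd), Nat.div_div_self hd (NeZero.ne k)]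
  split_ifs with hdt
  · obtain ⟨s, rfl⟩ := hdt
    obtain ⟨s, rfl⟩ := Nat.exists_eq_add_one_of_ne_zero (Nat.pos_of_mul_pos_left ht).ne'
    have h := card_filter_card_eq_succ_and_mem (0 : ZMod (k / d)) s
    rw [ZMod.card] at h
    rw [Nat.mul_div_cancel_left _ hd0, Nat.add_sub_cancel, ← h]
    simp_rw [mul_comm _ d, Nat.mul_left_cancel_iff hd0]
  · refine card_eq_zero.mpr (filter_false_of_mem fun B _ ⟨hB, _⟩ => hdt ⟨#B, ?_⟩)
    rw [← hB, mul_comm]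

theorem count_full_period_inclusion_exclusion_general (k t : ℕ) [NeZero k] (ht : 0 < t) :
    ((Finset.univ.filter (fun A : Finset (ZMod k) =>
        A.card = t ∧ (0 : ZMod k) ∈ A ∧ Function.minimalPeriod (sh k) A = k)).card : ℤ)
      = ∑ S ∈ (Nat.gcd k t).primeFactors.powerset,
          (-1) ^ S.card *
            (Nat.choose (k / S.prod id - 1) (t / S.prod id - 1) : ℤ) := by
  have hsplit :
      ({A | #A = t ∧ 0 ∈ A ∧ minimalPeriod (sh k) A = k} : Finset (Finset (ZMod k)))
        = {A ∈ ({A | #A = t ∧ 0 ∈ A} : Finset (Finset (ZMod k))) |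
            minimalPeriod (sh k) A = k} := by
    rw [filter_filter]
    simp only [and_assoc]
  rw [hsplit, card_minimalPeriod_eq_eq_sum_moebius _ _ (NeZero.pos k)]
  calc _ = ∑ d ∈ k.divisors with d ∣ t, μ d * ((k / d - 1).choose (t / d - 1) : ℤ) := by
        rw [sum_filter]
        refine sum_congr rfl fun d hd => ?_
        rw [filter_filter, card_isPeriodicPt_sh_div_eq (Nat.dvd_of_mem_divisors hd) ht]
        split_ifs <;> simp
    _ = ∑ d ∈ (k.gcd t).divisors, μ d • ((k / d - 1).choose (t / d - 1) : ℤ) := by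
        rw [← Nat.divisors_filter_dvd_of_dvd (NeZero.ne k) (Nat.gcd_dvd_left k t)]
        refine sum_congr (filter_congr fun d hd => ?_) fun d _ => (smul_eq_mul _ _).symm
        exact (Nat.dvd_gcd_iff.trans (and_iff_right (Nat.dvd_of_mem_divisors hd))).symm
    _ = _ := by
        rw [← Nat.sum_powerset_primeFactors_eq_sum_moebius (Nat.gcd_ne_zero_left (NeZero.ne k))]
        simp only [smul_eq_mul]

/-- Inclusion-exclusion over the prime factors of `gcd(k,t)`: the number of
`t`-subsets of `ZMod k` containing `0` with least period exactly `k` equals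
`∑_{S ⊆ M} (−1)^{|S|} C(k/∏_{i∈S} p_i − 1, t/∏_{i∈S} p_i − 1)`. -/
theorem count_full_period_inclusion_exclusion (k t : ℕ) [NeZero k] (ht : 0 < t)
    (htk : t ≤ k) :
    ((Finset.univ.filter (fun A : Finset (ZMod k) =>
        A.card = t ∧ (0 : ZMod k) ∈ A ∧ Function.minimalPeriod (sh k) A = k)).card : ℤ)
      = ∑ S ∈ (Nat.gcd k t).primeFactors.powerset,
          (-1) ^ S.card *
            (Nat.choose (k / S.prod id - 1) (t / S.prod id - 1) : ℤ) :=
  count_full_period_inclusion_exclusion_general k t ht
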